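/- Let T be an order saturation monad with saturator (−)*, and let (S̄, m, e) be a locally monotonic monad on Kl(T) which is a lifting of S : C → C satisfying m_X · S̄[(m_X · S̄α)* · e_X] = (m_X · S̄α)* for all α : X ⊸ S̄X. Then TS is an order saturation monad with saturator α^★ = (m_X · S̄α)* · e_X. -/

import Mathlib

/-!
Kleisli morphisms `X ⊸ Y` of `TS` are morphisms `X ⟶ S̄Y` of `Kl(T)`; the Kleisli
composition of `TS` is `g·f = f ≫ S̄.map g ≫ S̄.μ`, its unit is `S̄.η`, its order is the
one inherited from `Kl(T)`, and its `♯`-functor sends `f : X ⟶ Y` in `C` to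
`f♯ ≫ S̄.η.app Y`.

Every morphism `α : X ⟶ S̄X` is recovered from its Kleisli extension `bind α = S̄α ≫ m_X` as
`e_X ≫ bind α`, and `bind` is monotone, sends `e_X` to the identity and Kleisli composition
to composition. So the saturation axioms for `α^★ = e_X ≫ (bind α)*` in `Kl(TS)` follow from
those of `(bind α)*` in `Kl(T)`; the hypothesis on `S̄` says exactly `bind α^★ = (bind α)*`,
which gives transitivity. For compatibility with `f♯`, the lifting identifies `S̄(f♯)` with
`(Sf)♯` up to the equality of objects `S̄(♯X) = ♯(SX)`.
-/

open CategoryTheory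

variable {C : Type*} [Category C] (T : Monad C)
  [∀ X Y : Kleisli T, PartialOrder (X ⟶ Y)]

/-- Kleisli composition `g · f` for a monad `S̄` on `Kl(T)`. -/
def sComp (S' : Monad (Kleisli T)) {X Y Z : Kleisli T}
    (g : Y ⟶ S'.obj Z) (f : X ⟶ S'.obj Y) : X ⟶ S'.obj Z :=
  f ≫ S'.map g ≫ S'.μ.app Z

/-- The `♯`-image in `Kl(TS)` of a morphism `f : X ⟶ Y` of `C`. -/
def sSharp (S' : Monad (Kleisli T)) {X Y : C} (f : X ⟶ Y) :
    ((Kleisli.Adjunction.toKleisli T).obj X) ⟶ S'.obj ((Kleisli.Adjunction.toKleisli T).obj Y) :=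
  (Kleisli.Adjunction.toKleisli T).map f ≫ S'.η.app _

section Saturator

variable {D : Type*} [Category D] [∀ X Y : D, PartialOrder (X ⟶ Y)]
  (star : ∀ {X : D}, (X ⟶ X) → (X ⟶ X))

def StarCommutes {P Q : D} (u : P ⟶ Q) : Prop :=
  ∀ (a : P ⟶ P) (b : Q ⟶ Q),
    (a ≫ u ≤ u ≫ b → star a ≫ u ≤ u ≫ star b) ∧ (u ≫ b ≤ a ≫ u → u ≫ star b ≤ star a ≫ u)

lemma starCommutes_eqToHom_conj {P Q P' Q' : D} (hP : P = P') (hQ : Q = Q') {u : P ⟶ Q}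
    (hu : StarCommutes star u) :
    StarCommutes star (eqToHom hP.symm ≫ u ≫ eqToHom hQ) := by
  subst hP hQ
  simpa using hu

end Saturator

namespace CategoryTheory.Monad

variable {D : Type*} [Category D] (M : Monad D)

def bind {X Y : D} (g : X ⟶ M.obj Y) : M.obj X ⟶ M.obj Y :=
  M.map g ≫ M.μ.app Y

@[simp]
lemma η_comp_bind {X Y : D} (g : X ⟶ M.obj Y) : M.η.app X ≫ M.bind g = g := by
  simp [bind, ← M.η.naturality_assoc g]

@[simp]
lemma bind_η (X : D) : M.bind (M.η.app X) = 𝟙 (M.obj X) :=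
  M.right_unit X

lemma map_comp_bind {X Y Z : D} (u : X ⟶ Y) (g : Y ⟶ M.obj Z) :
    M.map u ≫ M.bind g = M.bind (u ≫ g) := by
  simp [bind]

lemma bind_comp_η {X Y : D} (u : X ⟶ Y) : M.bind (u ≫ M.η.app Y) = M.map u := by
  simp [← map_comp_bind]

lemma bind_comp_bind {X Y Z : D} (f : X ⟶ M.obj Y) (g : Y ⟶ M.obj Z) :
    M.bind (f ≫ M.bind g) = M.bind f ≫ M.bind g := by
  simp only [bind, Functor.map_comp, Category.assoc, M.assoc]
  rw [← M.μ.naturality_assoc g]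
  rfl

lemma bind_comp_map {X Y Z : D} (α : X ⟶ M.obj Y) (u : Y ⟶ Z) :
    M.bind α ≫ M.map u = M.bind (α ≫ M.map u) := by
  rw [← bind_comp_η, ← bind_comp_bind, bind_comp_η]

variable [∀ X Y : D, PartialOrder (X ⟶ Y)]

lemma bind_mono (hpre : ∀ {X Y Z : D} (g : Y ⟶ Z), Monotone (fun f : X ⟶ Y => f ≫ g))
    (hmono : ∀ {X Y : D}, Monotone (fun f : X ⟶ Y => M.map f)) {X Y : D} :
    Monotone (M.bind : (X ⟶ M.obj Y) → _) :=
  fun _ _ h => hpre _ (hmono h)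

variable (star : ∀ {X : D}, (X ⟶ X) → (X ⟶ X))

def liftedStar {X : D} (α : X ⟶ M.obj X) : X ⟶ M.obj X :=
  M.η.app X ≫ star (M.bind α)

lemma η_le_liftedStar
    (hpost : ∀ {X Y Z : D} (f : X ⟶ Y), Monotone (fun g : Y ⟶ Z => f ≫ g))
    (ha : ∀ {X : D} (α : X ⟶ X), 𝟙 X ≤ star α) {X : D} (α : X ⟶ M.obj X) :
    M.η.app X ≤ M.liftedStar star α := by
  simpa [liftedStar] using hpost (M.η.app X) (ha (M.bind α))

lemma le_liftedStar
    (hpost : ∀ {X Y Z : D} (f : X ⟶ Y), Monotone (fun g : Y ⟶ Z => f ≫ g))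
    (hb : ∀ {X : D} (α : X ⟶ X), α ≤ star α) {X : D} (α : X ⟶ M.obj X) :
    α ≤ M.liftedStar star α := by
  simpa [liftedStar] using hpost (M.η.app X) (hb (M.bind α))

lemma liftedStar_comp_bind_le
    (hpost : ∀ {X Y Z : D} (f : X ⟶ Y), Monotone (fun g : Y ⟶ Z => f ≫ g))
    (hc : ∀ {X : D} (α : X ⟶ X), star α ≫ star α ≤ star α)
    {X : D} (α : X ⟶ M.obj X) (hstar : M.bind (M.liftedStar star α) = star (M.bind α)) :
    M.liftedStar star α ≫ M.bind (M.liftedStar star α) ≤ M.liftedStar star α := by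
  rw [hstar, liftedStar, Category.assoc]
  exact hpost _ (hc _)

lemma liftedStar_le
    (hpost : ∀ {X Y Z : D} (f : X ⟶ Y), Monotone (fun g : Y ⟶ Z => f ≫ g))
    (hpre : ∀ {X Y Z : D} (g : Y ⟶ Z), Monotone (fun f : X ⟶ Y => f ≫ g))
    (hmono : ∀ {X Y : D}, Monotone (fun f : X ⟶ Y => M.map f))
    (hd : ∀ {X : D} (α β : X ⟶ X), 𝟙 X ≤ β → α ≤ β → β ≫ β ≤ β → star α ≤ β)
    {X : D} {α β : X ⟶ M.obj X} (h_refl : M.η.app X ≤ β) (h_le : α ≤ β)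
    (h_trans : β ≫ M.bind β ≤ β) : M.liftedStar star α ≤ β := by
  have h_star : star (M.bind α) ≤ M.bind β := by
    refine hd _ _ ?_ (M.bind_mono @hpre @hmono h_le) ?_
    · simpa using M.bind_mono @hpre @hmono h_refl
    · simpa [← bind_comp_bind] using M.bind_mono @hpre @hmono h_trans
  simpa [liftedStar] using hpost (M.η.app X) h_star

lemma liftedStar_comp_map_le
    (hpost : ∀ {X Y Z : D} (f : X ⟶ Y), Monotone (fun g : Y ⟶ Z => f ≫ g))
    (hpre : ∀ {X Y Z : D} (g : Y ⟶ Z), Monotone (fun f : X ⟶ Y => f ≫ g))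
    (hmono : ∀ {X Y : D}, Monotone (fun f : X ⟶ Y => M.map f))
    {P Q : D} {u : P ⟶ Q} (hu : StarCommutes star (M.map u))
    {α : P ⟶ M.obj P} {β : Q ⟶ M.obj Q} (h : α ≫ M.map u ≤ u ≫ β) :
    M.liftedStar star α ≫ M.map u ≤ u ≫ M.liftedStar star β := by
  have h_bind : M.bind α ≫ M.map u ≤ M.map u ≫ M.bind β := by
    rw [bind_comp_map, map_comp_bind]
    exact M.bind_mono @hpre @hmono h
  calc M.liftedStar star α ≫ M.map u
      = M.η.app P ≫ star (M.bind α) ≫ M.map u := Category.assoc _ _ _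
    _ ≤ M.η.app P ≫ M.map u ≫ star (M.bind β) := hpost _ ((hu _ _).1 h_bind)
    _ = u ≫ M.liftedStar star β := by
      rw [liftedStar, ← M.η.naturality_assoc, Functor.id_map]

lemma comp_liftedStar_le
    (hpost : ∀ {X Y Z : D} (f : X ⟶ Y), Monotone (fun g : Y ⟶ Z => f ≫ g))
    (hpre : ∀ {X Y Z : D} (g : Y ⟶ Z), Monotone (fun f : X ⟶ Y => f ≫ g))
    (hmono : ∀ {X Y : D}, Monotone (fun f : X ⟶ Y => M.map f))
    {P Q : D} {u : P ⟶ Q} (hu : StarCommutes star (M.map u))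
    {α : P ⟶ M.obj P} {β : Q ⟶ M.obj Q} (h : u ≫ β ≤ α ≫ M.map u) :
    u ≫ M.liftedStar star β ≤ M.liftedStar star α ≫ M.map u := by
  have h_bind : M.map u ≫ M.bind β ≤ M.bind α ≫ M.map u := by
    rw [bind_comp_map, map_comp_bind]
    exact M.bind_mono @hpre @hmono h
  calc u ≫ M.liftedStar star β
      = M.η.app P ≫ M.map u ≫ star (M.bind β) := by
        rw [liftedStar, ← M.η.naturality_assoc, Functor.id_map]
    _ ≤ M.η.app P ≫ star (M.bind α) ≫ M.map u := hpost _ ((hu _ _).2 h_bind)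
    _ = M.liftedStar star α ≫ M.map u := (Category.assoc _ _ _).symm

end CategoryTheory.Monad

lemma starCommutes_map_toKleisli_map {star : ∀ {X : Kleisli T}, (X ⟶ X) → (X ⟶ X)}
    (he : ∀ {X Y : C} (f : X ⟶ Y), StarCommutes star ((Kleisli.Adjunction.toKleisli T).map f))
    {S' : Monad (Kleisli T)} {S : C ⥤ C}
    (hlift : Kleisli.Adjunction.toKleisli T ⋙ S'.toFunctor =
      S ⋙ Kleisli.Adjunction.toKleisli T)
    {X Y : C} (f : X ⟶ Y) :
    StarCommutes star (S'.map ((Kleisli.Adjunction.toKleisli T).map f)) := by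
  have hX := Functor.congr_obj hlift X
  have hY := Functor.congr_obj hlift Y
  have hmap : S'.map ((Kleisli.Adjunction.toKleisli T).map f) =
      eqToHom hX ≫ (Kleisli.Adjunction.toKleisli T).map (S.map f) ≫ eqToHom hY.symm := by
    simpa using Functor.congr_hom hlift f
  rw [hmap]
  exact starCommutes_eqToHom_conj star hX.symm hY.symm (he (S.map f))

theorem TS_is_order_saturation_monad
    -- `Kl(T)` is order enriched: composition is monotone on both sides
    (hpost : ∀ {X Y Z : Kleisli T} (f : X ⟶ Y), Monotone (fun g : Y ⟶ Z => f ≫ g))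
    (hpre : ∀ {X Y Z : Kleisli T} (g : Y ⟶ Z), Monotone (fun f : X ⟶ Y => f ≫ g))
    -- the saturator of `T`
    (star : ∀ {X : Kleisli T}, (X ⟶ X) → (X ⟶ X))
    (ha : ∀ {X : Kleisli T} (α : X ⟶ X), 𝟙 X ≤ star α)
    (hb : ∀ {X : Kleisli T} (α : X ⟶ X), α ≤ star α)
    (hc : ∀ {X : Kleisli T} (α : X ⟶ X), star α ≫ star α ≤ star α)
    (hd : ∀ {X : Kleisli T} (α β : X ⟶ X),
      𝟙 X ≤ β → α ≤ β → β ≫ β ≤ β → star α ≤ β)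
    (he : ∀ {X Y : C} (f : X ⟶ Y)
      (α : ((Kleisli.Adjunction.toKleisli T).obj X) ⟶ (Kleisli.Adjunction.toKleisli T).obj X)
      (β : ((Kleisli.Adjunction.toKleisli T).obj Y) ⟶ (Kleisli.Adjunction.toKleisli T).obj Y),
      (α ≫ (Kleisli.Adjunction.toKleisli T).map f ≤ (Kleisli.Adjunction.toKleisli T).map f ≫ β →
        star α ≫ (Kleisli.Adjunction.toKleisli T).map f ≤
          (Kleisli.Adjunction.toKleisli T).map f ≫ star β) ∧
      ((Kleisli.Adjunction.toKleisli T).map f ≫ β ≤ α ≫ (Kleisli.Adjunction.toKleisli T).map f →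
        (Kleisli.Adjunction.toKleisli T).map f ≫ star β ≤
          star α ≫ (Kleisli.Adjunction.toKleisli T).map f))
    -- a monad `S̄` on `Kl(T)` lifting `S : C ⥤ C`
    (S' : Monad (Kleisli T)) (S : C ⥤ C)
    (hlift : Kleisli.Adjunction.toKleisli T ⋙ S'.toFunctor =
      S ⋙ Kleisli.Adjunction.toKleisli T)
    -- `S̄` is locally monotonic
    (hmono : ∀ {X Y : Kleisli T}, Monotone (fun f : X ⟶ Y => S'.map f))
    -- the compatibility equation `m_X · S̄[(m_X · S̄α)* · e_X] = (m_X · S̄α)*`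
    (hstar : ∀ {X : Kleisli T} (α : X ⟶ S'.obj X),
      S'.map (S'.η.app X ≫ star (S'.map α ≫ S'.μ.app X)) ≫ S'.μ.app X =
        star (S'.map α ≫ S'.μ.app X)) :
    -- then `α^★ := (m_X · S̄α)* · e_X = e_X ≫ (S̄α ≫ m_X)*` is a saturator for `TS`:
    -- (a) `1 ≤ α^★`
    (∀ {X : Kleisli T} (α : X ⟶ S'.obj X),
      S'.η.app X ≤ S'.η.app X ≫ star (S'.map α ≫ S'.μ.app X)) ∧
    -- (b) `α ≤ α^★`
    (∀ {X : Kleisli T} (α : X ⟶ S'.obj X),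
      α ≤ S'.η.app X ≫ star (S'.map α ≫ S'.μ.app X)) ∧
    -- (c) `α^★ · α^★ ≤ α^★`
    (∀ {X : Kleisli T} (α : X ⟶ S'.obj X),
      sComp T S' (S'.η.app X ≫ star (S'.map α ≫ S'.μ.app X))
          (S'.η.app X ≫ star (S'.map α ≫ S'.μ.app X)) ≤
        S'.η.app X ≫ star (S'.map α ≫ S'.μ.app X)) ∧
    -- (d) `α^★` is the least reflexive, transitive element above `α`
    (∀ {X : Kleisli T} (α β : X ⟶ S'.obj X),
      S'.η.app X ≤ β → α ≤ β → sComp T S' β β ≤ β →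
        S'.η.app X ≫ star (S'.map α ≫ S'.μ.app X) ≤ β) ∧
    -- (e) compatibility with `♯`-morphisms, for `≤` and `≥`
    (∀ {X Y : C} (f : X ⟶ Y)
      (α : ((Kleisli.Adjunction.toKleisli T).obj X) ⟶
        S'.obj ((Kleisli.Adjunction.toKleisli T).obj X))
      (β : ((Kleisli.Adjunction.toKleisli T).obj Y) ⟶
        S'.obj ((Kleisli.Adjunction.toKleisli T).obj Y)),
      (sComp T S' (sSharp T S' f) α ≤ sComp T S' β (sSharp T S' f) →
        sComp T S' (sSharp T S' f) (S'.η.app _ ≫ star (S'.map α ≫ S'.μ.app _)) ≤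
          sComp T S' (S'.η.app _ ≫ star (S'.map β ≫ S'.μ.app _)) (sSharp T S' f)) ∧
      (sComp T S' β (sSharp T S' f) ≤ sComp T S' (sSharp T S' f) α →
        sComp T S' (S'.η.app _ ≫ star (S'.map β ≫ S'.μ.app _)) (sSharp T S' f) ≤
          sComp T S' (sSharp T S' f) (S'.η.app _ ≫ star (S'.map α ≫ S'.μ.app _)))) := by
  refine ⟨S'.η_le_liftedStar star hpost ha, S'.le_liftedStar star hpost hb,
    fun α => S'.liftedStar_comp_bind_le star hpost hc α (hstar α),
    fun _ _ => S'.liftedStar_le star hpost hpre @hmono hd, fun {X Y} f α β => ?_⟩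
  have sComp_sSharp_left : ∀ γ : (Kleisli.Adjunction.toKleisli T).obj X ⟶
      S'.obj ((Kleisli.Adjunction.toKleisli T).obj X),
      sComp T S' (sSharp T S' f) γ = γ ≫ S'.map ((Kleisli.Adjunction.toKleisli T).map f) :=
    fun γ => congrArg (γ ≫ ·) (S'.bind_comp_η _)
  have sComp_sSharp_right : ∀ γ : (Kleisli.Adjunction.toKleisli T).obj Y ⟶
      S'.obj ((Kleisli.Adjunction.toKleisli T).obj Y),
      sComp T S' γ (sSharp T S' f) = (Kleisli.Adjunction.toKleisli T).map f ≫ γ :=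
    fun γ => (Category.assoc _ _ _).trans (congrArg _ (S'.η_comp_bind γ))
  have hf := starCommutes_map_toKleisli_map T (fun f => he f) hlift f
  simp only [sComp_sSharp_left, sComp_sSharp_right]
  exact ⟨S'.liftedStar_comp_map_le star hpost hpre @hmono hf,
    S'.comp_liftedStar_le star hpost hpre @hmono hf⟩
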